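/- If ŝ : [0,∞) → ℝ is differentiable with ŝ'(t) = P(ŝ(t), s_l, s_h, e(t)) where P is the scalar projection operator and ŝ(0) ∈ [s_l, s_h], then ŝ(t) ∈ [s_l, s_h] for all t ≥ 0. -/

import Mathlib

noncomputable def proj (s sl sh e : ℝ) : ℝ :=
  if (s ≥ sh ∧ e > 0) ∨ (s ≤ sl ∧ e < 0) then 0 else e

open Set

/-- Compare `f` with the barrier `c + δ (1 + (x - a))`, `δ > 0`: `f` can only meet it where
`f > c`, hence where `f' ≤ 0 < δ`, so it stays below; then let `δ → 0`. -/
theorem image_le_of_deriv_right_nonpos_above {f f' : ℝ → ℝ} {a b c : ℝ}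
    (hf : ContinuousOn f (Icc a b)) (hf' : ∀ x ∈ Ico a b, HasDerivWithinAt f (f' x) (Ici x) x)
    (ha : f a ≤ c) (bound : ∀ x ∈ Ico a b, c < f x → f' x ≤ 0) :
    ∀ ⦃x⦄, x ∈ Icc a b → f x ≤ c := by
  intro x hx
  refine le_of_forall_pos_le_add fun ε hε => ?_
  have hlen : 0 < 1 + (x - a) := by linarith [hx.1]
  set δ := ε / (1 + (x - a))
  have hδ : 0 < δ := div_pos hε hlen
  have barrier : ∀ y, HasDerivAt (fun y => c + δ * (1 + (y - a))) δ y := fun y => by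
    simpa using (((hasDerivAt_id y).sub_const a).const_add 1).const_mul δ |>.const_add c
  have key := image_le_of_deriv_right_lt_deriv_boundary hf hf' (by linarith) barrier
    (fun y hy hfy => (bound y hy (by nlinarith [hy.1])).trans_lt hδ) hx
  rwa [div_mul_cancel₀ ε hlen.ne'] at key

theorem image_ge_of_deriv_right_nonneg_below {f f' : ℝ → ℝ} {a b c : ℝ}
    (hf : ContinuousOn f (Icc a b)) (hf' : ∀ x ∈ Ico a b, HasDerivWithinAt f (f' x) (Ici x) x)
    (ha : c ≤ f a) (bound : ∀ x ∈ Ico a b, f x < c → 0 ≤ f' x) :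
    ∀ ⦃x⦄, x ∈ Icc a b → c ≤ f x := fun _ hx => neg_le_neg_iff.mp <|
  image_le_of_deriv_right_nonpos_above (f' := fun x => -f' x) hf.neg
    (fun x hx => (hf' x hx).neg) (neg_le_neg ha)
    (fun x hx hlt => neg_nonpos.mpr (bound x hx (neg_lt_neg_iff.mp hlt))) hx

theorem proj_nonpos_of_ge {s sl sh e : ℝ} (hs : sh ≤ s) : proj s sl sh e ≤ 0 := by
  unfold proj
  split_ifs with h
  · exact le_rfl
  · exact le_of_not_gt fun he => h (Or.inl ⟨hs, he⟩)

theorem proj_nonneg_of_le {s sl sh e : ℝ} (hs : s ≤ sl) : 0 ≤ proj s sl sh e := by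
  unfold proj
  split_ifs with h
  · exact le_rfl
  · exact le_of_not_gt fun he => h (Or.inr ⟨hs, he⟩)

theorem proj_ode_invariance_general (sl sh : ℝ)
    (e : ℝ → ℝ)
    (shat : ℝ → ℝ)
    (hderiv : ∀ t, HasDerivAt shat (proj (shat t) sl sh (e t)) t)
    (h0 : shat 0 ∈ Set.Icc sl sh) :
    ∀ t ≥ 0, shat t ∈ Set.Icc sl sh := by
  intro t ht
  have hcont : ContinuousOn shat (Icc 0 t) := fun x _ => (hderiv x).continuousAt.continuousWithinAt
  have hderiv' : ∀ x ∈ Ico 0 t, HasDerivWithinAt shat (proj (shat x) sl sh (e x)) (Ici x) x :=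
    fun x _ => (hderiv x).hasDerivWithinAt
  have hmem : t ∈ Icc 0 t := ⟨ht, le_rfl⟩
  exact ⟨image_ge_of_deriv_right_nonneg_below hcont hderiv' h0.1
      (fun _ _ hlt => proj_nonneg_of_le hlt.le) hmem,
    image_le_of_deriv_right_nonpos_above hcont hderiv' h0.2
      (fun _ _ hlt => proj_nonpos_of_ge hlt.le) hmem⟩

/-- Forward invariance of the parameter box under the projected update law. -/
theorem proj_ode_invariance (sl sh : ℝ) (hlh : sl < sh)
    (e : ℝ → ℝ) (he : Continuous e)
    (shat : ℝ → ℝ)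
    (hderiv : ∀ t, HasDerivAt shat (proj (shat t) sl sh (e t)) t)
    (h0 : shat 0 ∈ Set.Icc sl sh) :
    ∀ t ≥ 0, shat t ∈ Set.Icc sl sh :=
  proj_ode_invariance_general sl sh e shat hderiv h0
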